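/- arXiv:2508.14546 — 4 statements merged into one kernel-verified Lean document; each statement's English description precedes it below -/
import Mathlib

section
/- The T-gate channel on 2×2 density matrices admits the mixed-Clifford decomposition TσT† = (1/2)·IσI† + (1/√2)·SσS† + (1/2 - 1/√2)·ZσZ†, valid for all 2×2 matrices σ. -/
/-!
All four gates are diagonal, so conjugation by `diagonal d` is the Schur (entrywise) multiplication
by the rank-one phase matrix `d i * conj (d j)`. Both sides are therefore Schur multipliers, and the
identity reduces to an identity between 2×2 phase matrices, which holds entrywise because
`exp (iπ/4) = (1 + i)/√2`.
-/

open Matrix Complex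

noncomputable def Tgate : Matrix (Fin 2) (Fin 2) ℂ :=
  !![1, 0; 0, Complex.exp (Real.pi * Complex.I / 4)]

noncomputable def Sgate : Matrix (Fin 2) (Fin 2) ℂ := !![1, 0; 0, Complex.I]

noncomputable def Zgate : Matrix (Fin 2) (Fin 2) ℂ := !![1, 0; 0, -1]

theorem Matrix.diagonal_mul_mul_conjTranspose_diagonal {n α : Type*} [Fintype n] [DecidableEq n]
    [CommSemiring α] [StarRing α] (d : n → α) (A : Matrix n n α) :
    diagonal d * A * (diagonal d)ᴴ = vecMulVec d (star d) ⊙ A := by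
  ext i j
  rw [diagonal_conjTranspose, mul_diagonal, diagonal_mul, hadamard_apply, vecMulVec_apply,
    mul_right_comm]

theorem Complex.exp_pi_mul_I_div_four :
    cexp (Real.pi * I / 4) = ((1 / Real.sqrt 2 : ℝ) : ℂ) * (1 + I) := by
  have hsqrt : (1 / Real.sqrt 2 : ℝ) = Real.sqrt 2 / 2 := by
    field_simp
    rw [Real.sq_sqrt zero_le_two]
  rw [show (Real.pi * I / 4 : ℂ) = ((Real.pi / 4 : ℝ) : ℂ) * I by push_cast; ring, exp_mul_I,
    ← ofReal_cos, ← ofReal_sin, Real.cos_pi_div_four, Real.sin_pi_div_four, hsqrt]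
  ring

theorem T_channel_decomposition (σ : Matrix (Fin 2) (Fin 2) ℂ) :
    Tgate * σ * Tgateᴴ =
      ((1 / 2 : ℝ) : ℂ) • ((1 : Matrix (Fin 2) (Fin 2) ℂ) * σ * (1 : Matrix (Fin 2) (Fin 2) ℂ)ᴴ) +
      ((1 / Real.sqrt 2 : ℝ) : ℂ) • (Sgate * σ * Sgateᴴ) +
      ((1 / 2 - 1 / Real.sqrt 2 : ℝ) : ℂ) • (Zgate * σ * Zgateᴴ) := by
  rw [Tgate, Sgate, Zgate, ← diagonal_vec2, ← diagonal_vec2, ← diagonal_vec2, ← diagonal_one]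
  simp only [diagonal_mul_mul_conjTranspose_diagonal, ← smul_hadamard, ← add_hadamard]
  congr 1
  have hinv_sq : ((Real.sqrt 2 : ℝ) : ℂ)⁻¹ ^ 2 = 2⁻¹ := by
    rw [inv_pow, ← ofReal_pow, Real.sq_sqrt zero_le_two, ofReal_ofNat]
  ext i j
  simp only [Matrix.add_apply, Matrix.smul_apply, vecMulVec_apply, Pi.star_apply]
  fin_cases i <;> fin_cases j <;>
    simp only [Fin.zero_eta, Fin.mk_one, Fin.isValue, cons_val_zero, cons_val_one, cons_val_fin_one,
      exp_pi_mul_I_div_four, one_div, ofReal_inv, ofReal_sub, ofReal_ofNat, smul_eq_mul, star_mul',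
      star_inv₀, star_add, star_neg, star_one, RCLike.star_def, conj_ofReal, conj_I, mul_neg,
      I_mul_I, neg_neg]
  · ring
  · ring
  · ring
  · linear_combination (1 - I ^ 2) * hinv_sq - I_sq / 2
end

section
/- (Sub-multiplicativity of robustness) Let F_n, F_{n'} be finite sets of pure states on n and n' qubits respectively, with the property that ψ ∈ F_n and φ ∈ F_{n'} implies ψ⊗φ ∈ F_{n+n'}. With R_F the ℓ¹-minimization robustness over pseudo-mixtures of projectors onto F, one has R_{F_{n+n'}}(ρ ⊗ ρ') ≤ R_{F_n}(ρ)·R_{F_{n'}}(ρ'). -/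
open Matrix Kronecker

/-- The projector `|ψ⟩⟨ψ|` onto a vector `ψ`. -/
noncomputable def proj {α : Type*} (ψ : α → ℂ) : Matrix α α ℂ :=
  Matrix.vecMulVec ψ (star ψ)

/-- `c` gives a pseudo-mixture decomposition of `ρ` into projectors onto elements of `F`. -/
def IsDecomp {α : Type*} (F : Finset (α → ℂ)) (ρ : Matrix α α ℂ) (c : F → ℝ) : Prop :=
  (∑ i, c i = 1) ∧ ρ = ∑ i : F, (c i : ℂ) • proj (i : α → ℂ)

/-- The robustness of `ρ` with respect to the free states `F`. -/
noncomputable def robustness {α : Type*} (F : Finset (α → ℂ)) (ρ : Matrix α α ℂ) : ℝ :=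
  sInf { t | ∃ c : F → ℝ, IsDecomp F ρ c ∧ t = ∑ i, |c i| }

/-- The tensor product of two vectors. -/
def tensorVec {α β : Type*} (ψ : α → ℂ) (φ : β → ℂ) : α × β → ℂ :=
  fun p => ψ p.1 * φ p.2

lemma proj_tensorVec {α β : Type*} (ψ : α → ℂ) (φ : β → ℂ) :
    proj (tensorVec ψ φ) = proj ψ ⊗ₖ proj φ := by
  ext ⟨a, b⟩ ⟨a', b'⟩
  simp [proj, tensorVec, vecMulVec_apply, kroneckerMap_apply]
  ring

lemma sum_kronecker_sum {α β ι κ : Type*} (s : Finset ι) (t : Finset κ)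
    (A : ι → Matrix α α ℂ) (B : κ → Matrix β β ℂ) :
    (∑ i ∈ s, A i) ⊗ₖ (∑ j ∈ t, B j) = ∑ i ∈ s, ∑ j ∈ t, A i ⊗ₖ B j := by
  ext ⟨a, b⟩ ⟨a', b'⟩
  simp [kroneckerMap_apply, Matrix.sum_apply, Finset.sum_mul_sum]

lemma one_le_of_mem {α : Type*} {F : Finset (α → ℂ)} {ρ : Matrix α α ℂ} {t : ℝ}
    (ht : t ∈ { t | ∃ c : F → ℝ, IsDecomp F ρ c ∧ t = ∑ i, |c i| }) : 1 ≤ t := by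
  obtain ⟨c, ⟨hs, -⟩, rfl⟩ := ht
  calc (1:ℝ) = |∑ i, c i| := by rw [hs]; simp
  _ ≤ ∑ i, |c i| := Finset.abs_sum_le_sum_abs _ _

theorem robustness_submultiplicative {α β : Type*} [Fintype α] [Fintype β]
    [DecidableEq α] [DecidableEq β]
    (F₁ : Finset (α → ℂ)) (F₂ : Finset (β → ℂ)) (F₁₂ : Finset (α × β → ℂ))
    (hclosed : ∀ ψ ∈ F₁, ∀ φ ∈ F₂, tensorVec ψ φ ∈ F₁₂)
    (ρ : Matrix α α ℂ) (ρ' : Matrix β β ℂ)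
    (hdec : ∃ c : F₁ → ℝ, IsDecomp F₁ ρ c)
    (hdec' : ∃ c : F₂ → ℝ, IsDecomp F₂ ρ' c) :
    robustness F₁₂ (ρ ⊗ₖ ρ') ≤ robustness F₁ ρ * robustness F₂ ρ' := by
  classical
  set S₁ := { t | ∃ c : F₁ → ℝ, IsDecomp F₁ ρ c ∧ t = ∑ i, |c i| } with hS₁
  set S₂ := { t | ∃ c : F₂ → ℝ, IsDecomp F₂ ρ' c ∧ t = ∑ i, |c i| } with hS₂
  set S₁₂ := { t | ∃ c : F₁₂ → ℝ, IsDecomp F₁₂ (ρ ⊗ₖ ρ') c ∧ t = ∑ i, |c i| } with hS₁₂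
  have hne₁ : S₁.Nonempty := by obtain ⟨c, hc⟩ := hdec; exact ⟨_, c, hc, rfl⟩
  have hne₂ : S₂.Nonempty := by obtain ⟨c, hc⟩ := hdec'; exact ⟨_, c, hc, rfl⟩
  have hbdd : BddBelow S₁₂ := ⟨1, fun t ht => one_le_of_mem ht⟩
  have key : ∀ t ∈ S₁, ∀ t' ∈ S₂, sInf S₁₂ ≤ t * t' := by
    rintro t ⟨c, ⟨hcs, hcd⟩, rfl⟩ t' ⟨c', ⟨hcs', hcd'⟩, rfl⟩
    set g : ↥F₁ × ↥F₂ → ↥F₁₂ :=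
      fun p => ⟨tensorVec (p.1 : α → ℂ) (p.2 : β → ℂ), hclosed _ p.1.2 _ p.2.2⟩ with hg
    set d : ↥F₁₂ → ℝ :=
      fun χ => ∑ p ∈ Finset.univ.filter (fun p => g p = χ), c p.1 * c' p.2 with hd
    have hd1 : ∑ χ, d χ = 1 := by
      simp only [hd]
      rw [Finset.sum_fiberwise, Fintype.sum_prod_type, ← Finset.sum_mul_sum, hcs, hcs',
        mul_one]
    have hbig : ρ ⊗ₖ ρ' = ∑ p : ↥F₁ × ↥F₂,
        ((c p.1 * c' p.2 : ℝ) : ℂ) • proj (tensorVec (p.1 : α → ℂ) (p.2 : β → ℂ)) := by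
      rw [hcd, hcd', sum_kronecker_sum, Fintype.sum_prod_type]
      refine Finset.sum_congr rfl fun i _ => Finset.sum_congr rfl fun j _ => ?_
      rw [smul_kronecker, kronecker_smul, proj_tensorVec, smul_smul]
      push_cast
      rfl
    have hdecomp : ρ ⊗ₖ ρ' = ∑ χ : ↥F₁₂, (d χ : ℂ) • proj (χ : α × β → ℂ) := by
      rw [hbig, ← Finset.sum_fiberwise Finset.univ g
        (fun p => ((c p.1 * c' p.2 : ℝ) : ℂ) • proj (tensorVec (p.1 : α → ℂ) (p.2 : β → ℂ)))]
      refine Finset.sum_congr rfl fun χ _ => ?_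
      rw [hd]
      push_cast
      rw [Finset.sum_smul]
      refine (Finset.sum_congr rfl fun p hp => ?_).symm
      have hgp : g p = χ := (Finset.mem_filter.mp hp).2
      have : (χ : α × β → ℂ) = tensorVec (p.1 : α → ℂ) (p.2 : β → ℂ) := by
        rw [← hgp]
      rw [this]
    have habs : ∑ χ, |d χ| ≤ (∑ i, |c i|) * (∑ i, |c' i|) := by
      calc ∑ χ, |d χ| ≤ ∑ χ : ↥F₁₂, ∑ p ∈ Finset.univ.filter (fun p => g p = χ),
            |c p.1 * c' p.2| := Finset.sum_le_sum fun χ _ => Finset.abs_sum_le_sum_abs _ _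
      _ = ∑ p : ↥F₁ × ↥F₂, |c p.1 * c' p.2| := Finset.sum_fiberwise _ _ _
      _ = (∑ i, |c i|) * (∑ i, |c' i|) := by
          rw [Fintype.sum_prod_type]
          simp only [abs_mul]
          rw [← Finset.sum_mul_sum]
    exact le_trans (csInf_le hbdd ⟨d, ⟨hd1, hdecomp⟩, rfl⟩) habs
  have ha : 1 ≤ sInf S₁ := le_csInf hne₁ fun t ht => one_le_of_mem ht
  have hb : 1 ≤ sInf S₂ := le_csInf hne₂ fun t ht => one_le_of_mem ht
  show sInf S₁₂ ≤ sInf S₁ * sInf S₂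
  apply le_of_forall_pos_le_add
  intro ε hε
  set a := sInf S₁; set b := sInf S₂
  have hpos : (0:ℝ) < a + b + 1 := by linarith
  have hδpos : 0 < min 1 (ε / (a + b + 1)) := lt_min one_pos (by positivity)
  set δ := min 1 (ε / (a + b + 1)) with hδ
  obtain ⟨t, ht, htlt⟩ := Real.lt_sInf_add_pos hne₁ hδpos
  obtain ⟨t', ht', htlt'⟩ := Real.lt_sInf_add_pos hne₂ hδpos
  have h1 : 1 ≤ t := one_le_of_mem ht
  have h1' : 1 ≤ t' := one_le_of_mem ht'
  have hδ1 : δ ≤ 1 := min_le_left _ _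
  have hδ2 : δ * (a + b + 1) ≤ ε := by
    calc δ * (a + b + 1) ≤ (ε / (a + b + 1)) * (a + b + 1) :=
          mul_le_mul_of_nonneg_right (min_le_right _ _) hpos.le
    _ = ε := div_mul_cancel₀ _ hpos.ne'
  calc sInf S₁₂ ≤ t * t' := key t ht t' ht'
  _ ≤ (a + δ) * (b + δ) := by nlinarith
  _ ≤ a * b + ε := by nlinarith
end

section
/- (Monotonicity of robustness under free channels) Let F, F' be finite sets of pure states and Φ a linear trace-preserving map such that for every ψ ∈ F, Φ(|ψ⟩⟨ψ|) = ∑_j t_{ψ,j} |φ_j⟩⟨φ_j| with φ_j ∈ F', t_{ψ,j} ≥ 0, and ∑_j t_{ψ,j} = 1. Then for any ρ admitting an F-pseudo-mixture decomposition, R_{F'}(Φ(ρ)) ≤ R_F(ρ). -/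
open Matrix

lemma coe_smul_mat {γ : Type*} (c : ℝ) (M : Matrix γ γ ℂ) : (c : ℂ) • M = c • M := by
  ext a b
  simp [Matrix.smul_apply, Complex.real_smul]

theorem robustness_monotone {α β : Type*} [Fintype α] [Fintype β]
    (F : Finset (α → ℂ)) (F' : Finset (β → ℂ))
    (Φ : Matrix α α ℂ →ₗ[ℝ] Matrix β β ℂ)
    (htrace : ∀ M : Matrix α α ℂ, (Φ M).trace = M.trace)
    (hfree : ∀ ψ ∈ F, ∃ t : F' → ℝ, (∀ j, 0 ≤ t j) ∧ (∑ j, t j = 1) ∧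
      Φ (proj ψ) = ∑ j : F', (t j : ℂ) • proj (j : β → ℂ))
    (ρ : Matrix α α ℂ) (hdec : ∃ c : F → ℝ, IsDecomp F ρ c) :
    robustness F' (Φ ρ) ≤ robustness F ρ := by
  choose T hT0 hT1 hTΦ using hfree
  -- For each decomposition of ρ, build one for Φ ρ
  have key : ∀ c : F → ℝ, IsDecomp F ρ c →
      robustness F' (Φ ρ) ≤ ∑ i, |c i| := by
    intro c hc
    obtain ⟨hc1, hc2⟩ := hc
    set c' : F' → ℝ := fun j => ∑ i : F, c i * T i i.2 j with hc'
    have hΦρ : Φ ρ = ∑ j : F', (c' j : ℂ) • proj (j : β → ℂ) := by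
      have hρ' : ρ = ∑ i : F, c i • proj (i : α → ℂ) := by
        rw [hc2]; exact Finset.sum_congr rfl fun i _ => coe_smul_mat _ _
      rw [hρ', map_sum]
      simp only [_root_.map_smul]
      have : ∀ i : F, c i • Φ (proj (i : α → ℂ))
          = ∑ j : F', (c i * T i i.2 j : ℝ) • proj (j : β → ℂ) := by
        intro i
        rw [hTΦ i i.2, Finset.smul_sum]
        refine Finset.sum_congr rfl fun j _ => ?_
        rw [coe_smul_mat, smul_smul]
      rw [Finset.sum_congr rfl fun i _ => this i, Finset.sum_comm]
      refine Finset.sum_congr rfl fun j _ => ?_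
      rw [coe_smul_mat, hc', ← Finset.sum_smul]
    have hmem : (∑ j, |c' j|) ∈ { t | ∃ c : F' → ℝ, IsDecomp F' (Φ ρ) c ∧ t = ∑ i, |c i| } := by
      refine ⟨c', ⟨?_, hΦρ⟩, rfl⟩
      rw [hc', Finset.sum_comm]
      calc ∑ i : F, ∑ j : F', c i * T i i.2 j
          = ∑ i : F, c i * ∑ j : F', T i i.2 j := by
            refine Finset.sum_congr rfl fun i _ => ?_; rw [Finset.mul_sum]
        _ = 1 := by simp only [hT1]; simpa using hc1
    have hbdd : BddBelow { t | ∃ c : F' → ℝ, IsDecomp F' (Φ ρ) c ∧ t = ∑ i, |c i| } := by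
      refine ⟨0, fun t ht => ?_⟩
      obtain ⟨d, _, rfl⟩ := ht
      exact Finset.sum_nonneg fun i _ => abs_nonneg _
    have h1 : robustness F' (Φ ρ) ≤ ∑ j, |c' j| := csInf_le hbdd hmem
    refine h1.trans ?_
    calc ∑ j, |c' j| ≤ ∑ j : F', ∑ i : F, |c i| * T i i.2 j := by
          refine Finset.sum_le_sum fun j _ => ?_
          refine (Finset.abs_sum_le_sum_abs _ _).trans (Finset.sum_le_sum fun i _ => ?_)
          rw [abs_mul, abs_of_nonneg (hT0 _ i.2 j)]
      _ = ∑ i : F, |c i| := by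
          rw [Finset.sum_comm]
          refine Finset.sum_congr rfl fun i _ => ?_
          rw [← Finset.mul_sum, hT1 i i.2, mul_one]
  obtain ⟨c0, hc0⟩ := hdec
  refine le_csInf ⟨∑ i, |c0 i|, c0, hc0, rfl⟩ ?_
  rintro t ⟨c, hc, rfl⟩
  exact key c hc
end

section
/- (Lower bound via dual feasibility) Let F be a finite set of n-qubit pure states such that ∑_{a=1}^{4ⁿ} |Tr(P_a |ψ⟩⟨ψ|)| ≤ M for all ψ ∈ F, where {P_a} are the 4ⁿ Pauli operators. Then for any Hermitian ρ with an F-pseudo-mixture decomposition, R_F(ρ) ≥ (1/M)·∑_{a=1}^{4ⁿ} |Tr(P_a ρ)|. -/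
open Matrix

noncomputable def pauli : Fin 4 → Matrix (Fin 2) (Fin 2) ℂ
  | 0 => 1
  | 1 => !![0, 1; 1, 0]
  | 2 => !![0, -Complex.I; Complex.I, 0]
  | 3 => !![1, 0; 0, -1]

/-- The `n`-fold tensor product of single-qubit Pauli matrices indexed by `f`. -/
noncomputable def pauliTensor {n : ℕ} (f : Fin n → Fin 4) :
    Matrix (Fin n → Fin 2) (Fin n → Fin 2) ℂ :=
  fun i j => ∏ k, pauli (f k) (i k) (j k)

/-! The Pauli weight `W σ = ∑ₐ |Tr (Pₐ σ)|` is a seminorm, so every pseudo-mixture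
`ρ = ∑ᵢ cᵢ |ψᵢ⟩⟨ψᵢ|` satisfies `W ρ ≤ ∑ᵢ |cᵢ| W |ψᵢ⟩⟨ψᵢ| ≤ M ∑ᵢ |cᵢ|`; taking the infimum over
decompositions bounds the robustness from below by `W ρ / M`. -/

section TraceFunctionals

variable {ι α β : Type*} [Fintype ι] [Fintype α]

theorem sum_norm_trace_mul_sum_smul_le (P : ι → Matrix α α ℂ) (s : Finset β) (c : β → ℝ)
    (σ : β → Matrix α α ℂ) :
    ∑ a, ‖(P a * ∑ i ∈ s, (c i : ℂ) • σ i).trace‖ ≤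
      ∑ i ∈ s, |c i| * ∑ a, ‖(P a * σ i).trace‖ := by
  calc ∑ a, ‖(P a * ∑ i ∈ s, (c i : ℂ) • σ i).trace‖
      ≤ ∑ a, ∑ i ∈ s, |c i| * ‖(P a * σ i).trace‖ := by
        gcongr with a
        rw [Matrix.mul_sum, trace_sum]
        refine (norm_sum_le _ _).trans_eq (Finset.sum_congr rfl fun i _ => ?_)
        rw [Matrix.mul_smul, trace_smul, smul_eq_mul, norm_mul, Complex.norm_real,
          Real.norm_eq_abs]
    _ = ∑ i ∈ s, |c i| * ∑ a, ‖(P a * σ i).trace‖ := by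
        simp only [Finset.mul_sum]
        exact Finset.sum_comm

theorem sum_norm_trace_mul_sum_smul_le_mul {P : ι → Matrix α α ℂ} {s : Finset β}
    {σ : β → Matrix α α ℂ} {M : ℝ} (hM : ∀ i ∈ s, ∑ a, ‖(P a * σ i).trace‖ ≤ M) (c : β → ℝ) :
    ∑ a, ‖(P a * ∑ i ∈ s, (c i : ℂ) • σ i).trace‖ ≤ M * ∑ i ∈ s, |c i| := by
  calc ∑ a, ‖(P a * ∑ i ∈ s, (c i : ℂ) • σ i).trace‖
      ≤ ∑ i ∈ s, |c i| * ∑ a, ‖(P a * σ i).trace‖ :=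
        sum_norm_trace_mul_sum_smul_le P s c σ
    _ ≤ ∑ i ∈ s, |c i| * M := by gcongr with i hi; exact hM i hi
    _ = M * ∑ i ∈ s, |c i| := by rw [← Finset.sum_mul, mul_comm]

end TraceFunctionals

theorem le_robustness {α : Type*} {F : Finset (α → ℂ)} {ρ : Matrix α α ℂ} {B : ℝ}
    (hdec : ∃ c : F → ℝ, IsDecomp F ρ c)
    (h : ∀ c : F → ℝ, IsDecomp F ρ c → B ≤ ∑ i, |c i|) :
    B ≤ robustness F ρ := by
  obtain ⟨c, hc⟩ := hdec
  refine le_csInf ⟨_, c, hc, rfl⟩ ?_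
  rintro t ⟨c, hc, rfl⟩
  exact h c hc

theorem one_div_mul_le_of_le_mul {w t M : ℝ} (hw : 0 ≤ w) (ht : 0 ≤ t) (h : w ≤ M * t) :
    1 / M * w ≤ t := by
  rcases le_or_gt M 0 with hM | hM
  · exact (mul_nonpos_of_nonpos_of_nonneg (one_div_nonpos.mpr hM) hw).trans ht
  · rwa [one_div_mul_eq_div, div_le_iff₀ hM, mul_comm]

theorem robustness_lower_bound_general {n : ℕ} (F : Finset ((Fin n → Fin 2) → ℂ)) (M : ℝ)
    (hM : ∀ ψ ∈ F, ∑ f : Fin n → Fin 4,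
      ‖(pauliTensor f * proj ψ).trace‖ ≤ M)
    (ρ : Matrix (Fin n → Fin 2) (Fin n → Fin 2) ℂ)
    (hdec : ∃ c : F → ℝ, IsDecomp F ρ c) :
    (1 / M) * ∑ f : Fin n → Fin 4, ‖(pauliTensor f * ρ).trace‖ ≤
      robustness F ρ := by
  refine le_robustness hdec fun c ⟨_, hρ⟩ => ?_
  refine one_div_mul_le_of_le_mul (Finset.sum_nonneg fun _ _ => norm_nonneg _)
    (Finset.sum_nonneg fun _ _ => abs_nonneg _) ?_
  rw [hρ]
  exact sum_norm_trace_mul_sum_smul_le_mul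
    (σ := fun ψ : F => proj (ψ : (Fin n → Fin 2) → ℂ)) (fun ψ _ => hM ψ ψ.2) c

theorem robustness_lower_bound {n : ℕ} (F : Finset ((Fin n → Fin 2) → ℂ)) (M : ℝ)
    (hM : ∀ ψ ∈ F, ∑ f : Fin n → Fin 4,
      ‖(pauliTensor f * proj ψ).trace‖ ≤ M)
    (ρ : Matrix (Fin n → Fin 2) (Fin n → Fin 2) ℂ) (hherm : ρ.IsHermitian)
    (hdec : ∃ c : F → ℝ, IsDecomp F ρ c) :
    (1 / M) * ∑ f : Fin n → Fin 4, ‖(pauliTensor f * ρ).trace‖ ≤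
      robustness F ρ :=
  robustness_lower_bound_general F M hM ρ hdec
end
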